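/- arXiv:2605.11544 — 2 statements merged into one kernel-verified Lean document; each statement's English description precedes it below -/
import Mathlib

section
/- There exists an incremental observation optimal strategy: a strategy σ* such that for every history h ∈ pre(σ*), V_h(σ*) = max over σ ∈ comp(h) of V_h(σ). -/
open Classical

/-- Syntax of LTLf formulas over atoms `AP`. -/
inductive LTLf (AP : Type) : Type where
  | atom  : AP → LTLf AP
  | conj  : LTLf AP → LTLf AP → LTLf AP
  | neg   : LTLf AP → LTLf AP
  | next  : LTLf AP → LTLf AP
  | untl  : LTLf AP → LTLf AP → LTLf AP

/-- Satisfaction of an LTLf formula at instant `i` of a finite trace `π`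
    (a list of letters, each letter a set of atoms). -/
def LTLf.SatAt {AP : Type} (π : List (Set AP)) : LTLf AP → ℕ → Prop
  | .atom p, i => i < π.length ∧ p ∈ π.getD i ∅
  | .conj f g, i => f.SatAt π i ∧ g.SatAt π i
  | .neg f, i => ¬ f.SatAt π i
  | .next f, i => i + 1 < π.length ∧ f.SatAt π (i + 1)
  | .untl f g, i => ∃ j, i ≤ j ∧ j < π.length ∧ g.SatAt π j ∧
      ∀ k, i ≤ k → k < j → f.SatAt π k

/-- A finite nonempty trace satisfies an LTLf formula if it holds at instant 0. -/
def LTLf.FinSat {AP : Type} (π : List (Set AP)) (f : LTLf AP) : Prop :=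
  π ≠ [] ∧ f.SatAt π 0

/-- A letter of the alphabet `2^(𝒳 ∪ 𝒴)`: a subset of `X ⊕ Y`. -/
abbrev GameLetter (X Y : Type) := Set (X ⊕ Y)

/-- The letter `X ∪ Y` determined by an input valuation and an output valuation. -/
def mkLetter {X Y : Type} (Xs : Set X) (Ys : Set Y) : GameLetter X Y :=
  {a | Sum.elim (fun x => x ∈ Xs) (fun y => y ∈ Ys) a}

/-- An agent strategy `σ : (2^𝒳)* → 2^𝒴`. -/
abbrev Strategy (X Y : Type) := List (Set X) → Set Y

/-- The prefix of length `k` of an infinite word. -/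
def prefixList {A : Type} (π : ℕ → A) (k : ℕ) : List A :=
  (List.range k).map π

/-- The infinite trace `π(𝐗,σ)` induced by a strategy `σ` and inputs `𝐗`:
    its `n`-th letter is `X_n ∪ σ(X_0 ⋯ X_{n-1})`. -/
def play {X Y : Type} (σ : Strategy X Y) (Xs : ℕ → Set X) : ℕ → GameLetter X Y :=
  fun n => mkLetter (Xs n) (σ (prefixList Xs n))

/-- An infinite trace satisfies an LTLf formula iff some finite nonempty prefix does. -/
def InfSat {X Y : Type} (π : ℕ → GameLetter X Y) (f : LTLf (X ⊕ Y)) : Prop :=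
  ∃ k : ℕ, LTLf.FinSat (prefixList π (k + 1)) f

/-- A strategy is winning for an LTLf formula: every induced trace satisfies it. -/
def Wins {X Y : Type} (σ : Strategy X Y) (f : LTLf (X ⊕ Y)) : Prop :=
  ∀ Xs : ℕ → Set X, InfSat (play σ Xs) f

/-- A finite set of LTLf formulas is realisable if some strategy is winning for the
    conjunction of all formulas in the set. -/
def Realisable {X Y : Type} (Ψ : Finset (LTLf (X ⊕ Y))) : Prop :=
  ∃ σ : Strategy X Y, ∀ Xs : ℕ → Set X, ∃ k : ℕ,
    ∀ f ∈ Ψ, LTLf.FinSat (prefixList (play σ Xs) (k + 1)) f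

/-- Observed value of an infinite trace: sum of the values of satisfied formulas. -/
noncomputable def traceValue {X Y : Type} (Φ : Finset (LTLf (X ⊕ Y)))
    (V : LTLf (X ⊕ Y) → ℝ) (π : ℕ → GameLetter X Y) : ℝ :=
  ∑ f ∈ Φ, if InfSat π f then V f else 0

/-- Observed value of a strategy: minimum over inputs of the observed trace value. -/
noncomputable def stratValue {X Y : Type} (Φ : Finset (LTLf (X ⊕ Y)))
    (V : LTLf (X ⊕ Y) → ℝ) (σ : Strategy X Y) : ℝ :=
  sInf {v | ∃ Xs : ℕ → Set X, v = traceValue Φ V (play σ Xs)}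

/-- Guarantee value of a strategy: sum of values of the formulas it wins. -/
noncomputable def guaranteeValue {X Y : Type} (Φ : Finset (LTLf (X ⊕ Y)))
    (G : LTLf (X ⊕ Y) → ℝ) (σ : Strategy X Y) : ℝ :=
  ∑ f ∈ Φ, if Wins σ f then G f else 0

/-- `preSet σ`: the set of finite prefixes of the plays induced by `σ`. -/
def preSet {X Y : Type} (σ : Strategy X Y) : Set (List (GameLetter X Y)) :=
  {h | ∃ Xs : ℕ → Set X, prefixList (play σ Xs) h.length = h}

/-- `V_h(σ)`: minimum observed value over the plays of `σ` extending the history `h`. -/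
noncomputable def histValue {X Y : Type} (Φ : Finset (LTLf (X ⊕ Y)))
    (V : LTLf (X ⊕ Y) → ℝ) (σ : Strategy X Y) (h : List (GameLetter X Y)) : ℝ :=
  sInf {v | ∃ Xs : ℕ → Set X,
    prefixList (play σ Xs) h.length = h ∧ v = traceValue Φ V (play σ Xs)}

/-- Controllable preimage: states from which the agent can force `S` in one step. -/
def PreC {X Y Q : Type} (M : DFA (GameLetter X Y) Q) (S : Set Q) : Set Q :=
  {q | ∃ Ys : Set Y, ∀ Xs : Set X, M.step q (mkLetter Xs Ys) ∈ S}

/-- The iterates `Win_i` of the reachability fixed point computation. -/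
def WinIter {X Y Q : Type} (M : DFA (GameLetter X Y) Q) (F : Set Q) : ℕ → Set Q
  | 0 => F
  | i + 1 => WinIter M F i ∪ PreC M (WinIter M F i)

/-- The winning region: the limit of the nondecreasing sequence `Win_i`. -/
def WinRegion {X Y Q : Type} (M : DFA (GameLetter X Y) Q) (F : Set Q) : Set Q :=
  ⋃ i : ℕ, WinIter M F i

/-- The run of a DFA from state `q` on an infinite word. -/
def runFrom {A Q : Type} (M : DFA A Q) (q : Q) (π : ℕ → A) : ℕ → Q
  | 0 => q
  | n + 1 => M.step (runFrom M q π n) (π n)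

/-- A strategy is winning in the DFA game `(𝒜_q, F)`: every induced play,
    starting from `q`, visits a state of `F`. -/
def WinsGameFrom {X Y Q : Type} (M : DFA (GameLetter X Y) Q) (q : Q) (F : Set Q)
    (σ : Strategy X Y) : Prop :=
  ∀ Xs : ℕ → Set X, ∃ n : ℕ, runFrom M q (play σ Xs) n ∈ F

/-- The product automaton of a family of DFAs (accepting states irrelevant). -/
def prodDFA {X Y ι : Type} {Qs : ι → Type}
    (A : ∀ i, DFA (GameLetter X Y) (Qs i)) : DFA (GameLetter X Y) (∀ i, Qs i) where
  step := fun q a i => (A i).step (q i) a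
  start := fun i => (A i).start
  accept := ∅

/-- `F_Ψ`: product states whose `i`-th component is accepting for every `i ∈ Ψ`. -/
def FPsi {X Y ι : Type} {Qs : ι → Type} (A : ∀ i, DFA (GameLetter X Y) (Qs i))
    (Ψ : Finset ι) : Set (∀ i, Qs i) :=
  {q | ∀ i ∈ Ψ, q i ∈ (A i).accept}

/-- `F_v`: union of the `F_Ψ` over subsets `Ψ` of total value at least `v`. -/
def Fge {X Y ι : Type} {Qs : ι → Type}
    (A : ∀ i, DFA (GameLetter X Y) (Qs i)) (V : ι → ℝ) (v : ℝ) : Set (∀ i, Qs i) :=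
  ⋃ Ψ ∈ {Ψ : Finset ι | v ≤ ∑ i ∈ Ψ, V i}, FPsi A Ψ

/-- `F^=_v`: union of the `F_Ψ` over subsets `Ψ` of total value exactly `v`. -/
def Feq {X Y ι : Type} {Qs : ι → Type}
    (A : ∀ i, DFA (GameLetter X Y) (Qs i)) (V : ι → ℝ) (v : ℝ) : Set (∀ i, Qs i) :=
  ⋃ Ψ ∈ {Ψ : Finset ι | ∑ i ∈ Ψ, V i = v}, FPsi A Ψ

/-- Observed value of an infinite trace for an indexed family of formulas. -/
noncomputable def traceValueI {X Y ι : Type} [Fintype ι] (φ : ι → LTLf (X ⊕ Y))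
    (V : ι → ℝ) (π : ℕ → GameLetter X Y) : ℝ :=
  ∑ i : ι, if InfSat π (φ i) then V i else 0

/-- Observed value of a strategy for an indexed family of formulas. -/
noncomputable def stratValueI {X Y ι : Type} [Fintype ι] (φ : ι → LTLf (X ⊕ Y))
    (V : ι → ℝ) (σ : Strategy X Y) : ℝ :=
  sInf {v | ∃ Xs : ℕ → Set X, v = traceValueI φ V (play σ Xs)}

/-!
Only finitely many payoff values occur (the subset sums of `V` over `Φ`), and the argument
uses nothing else about the payoff. Along a play, follow a strategy that is optimal from the
current history, and replace it by a new optimal one only when it stops being optimal. The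
optimal value of the history never decreases along the play, since the followed strategy still
guarantees it one step later, and the strategy is replaced only when that value strictly
increases. Taking finitely many values, it eventually stabilises; from then on the play is a
play of one fixed strategy that is optimal from a history extending every earlier one, so its
payoff is at least the optimal value of each of its prefixes.
-/

section Prefixes

variable {A : Type}

lemma prefixList_length (π : ℕ → A) (n : ℕ) : (prefixList π n).length = n := by
  simp [prefixList]

lemma prefixList_succ (π : ℕ → A) (n : ℕ) :
    prefixList π (n + 1) = prefixList π n ++ [π n] := by
  simp [prefixList, List.range_succ]

lemma prefixList_eq_prefixList_iff {π π' : ℕ → A} {n : ℕ} :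
    prefixList π n = prefixList π' n ↔ ∀ k < n, π k = π' k := by
  simp [prefixList, List.ext_getElem_iff]

lemma getD_prefixList {π : ℕ → A} {n k : ℕ} (hk : k < n) (d : A) :
    (prefixList π n).getD k d = π k := by
  simp [prefixList, hk]

lemma take_prefixList (π : ℕ → A) {m n : ℕ} (hmn : m ≤ n) :
    (prefixList π n).take m = prefixList π m := by
  rw [prefixList, prefixList, ← List.map_take, List.take_range, min_eq_left hmn]

lemma prefixList_prefix_succ (π : ℕ → A) (n : ℕ) :
    prefixList π n <+: prefixList π (n + 1) :=
  prefixList_succ π n ▸ List.prefix_append _ _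

lemma prefixList_eq_of_prefix {π : ℕ → A} {h h' : List A}
    (hπ : prefixList π h'.length = h') (hh : h <+: h') : prefixList π h.length = h := by
  rw [← take_prefixList π hh.length_le, hπ, ← List.prefix_iff_eq_take.1 hh]

end Prefixes

section Plays

variable {X Y : Type}

lemma prefixList_play_congr (σ : Strategy X Y) {Xs Xs' : ℕ → Set X} {n : ℕ}
    (h : ∀ k < n, Xs k = Xs' k) : prefixList (play σ Xs) n = prefixList (play σ Xs') n := by
  refine prefixList_eq_prefixList_iff.2 fun k hk => ?_
  have hpre : prefixList Xs k = prefixList Xs' k :=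
    prefixList_eq_prefixList_iff.2 fun j hj => h j (hj.trans hk)
  simp only [play, hpre, h k hk]

lemma inputs_eq_of_prefixList_play_eq {σ σ' : Strategy X Y} {Xs Xs' : ℕ → Set X} {n : ℕ}
    (h : prefixList (play σ Xs) n = prefixList (play σ' Xs') n) : ∀ k < n, Xs k = Xs' k := by
  intro k hk
  ext x
  simpa [play, mkLetter] using Set.ext_iff.1 (prefixList_eq_prefixList_iff.1 h k hk) (.inl x)

lemma prefixList_play_mem_preSet (σ : Strategy X Y) (Xs : ℕ → Set X) (n : ℕ) :
    prefixList (play σ Xs) n ∈ preSet σ :=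
  ⟨Xs, by rw [prefixList_length]⟩

end Plays

section Payoff

variable {X Y : Type} {β : Type*} (u : (ℕ → GameLetter X Y) → β)

def outcomesFrom (σ : Strategy X Y) (h : List (GameLetter X Y)) : Set β :=
  {v | ∃ Xs : ℕ → Set X, prefixList (play σ Xs) h.length = h ∧ v = u (play σ Xs)}

lemma outcomesFrom_subset_range (σ : Strategy X Y) (h : List (GameLetter X Y)) :
    outcomesFrom u σ h ⊆ Set.range u := by
  rintro _ ⟨Xs, -, rfl⟩
  exact ⟨_, rfl⟩

variable [ConditionallyCompleteLinearOrder β]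

noncomputable def worstOutcome (σ : Strategy X Y) (h : List (GameLetter X Y)) : β :=
  sInf (outcomesFrom u σ h)

noncomputable def optOutcome (h : List (GameLetter X Y)) : β :=
  sSup {v | ∃ σ : Strategy X Y, h ∈ preSet σ ∧ v = worstOutcome u σ h}

variable {u}

lemma worstOutcome_le (hu : (Set.range u).Finite) {σ : Strategy X Y}
    {h : List (GameLetter X Y)} {v : β} (hv : v ∈ outcomesFrom u σ h) :
    worstOutcome u σ h ≤ v :=
  have : Nonempty β := ⟨v⟩
  csInf_le ((hu.subset (outcomesFrom_subset_range u σ h)).bddBelow) hv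

lemma worstOutcome_mem (hu : (Set.range u).Finite) {σ : Strategy X Y}
    {h : List (GameLetter X Y)} (hp : h ∈ preSet σ) :
    worstOutcome u σ h ∈ outcomesFrom u σ h := by
  obtain ⟨Xs, hXs⟩ := hp
  exact Set.Nonempty.csInf_mem ⟨_, Xs, hXs, rfl⟩ (hu.subset (outcomesFrom_subset_range u σ h))

lemma worstOutcome_mono (hu : (Set.range u).Finite) {σ : Strategy X Y}
    {h h' : List (GameLetter X Y)} (hp : h' ∈ preSet σ) (hh : h <+: h') :
    worstOutcome u σ h ≤ worstOutcome u σ h' := by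
  obtain ⟨Xs, hXs, hv⟩ := worstOutcome_mem hu hp
  exact hv ▸ worstOutcome_le hu ⟨Xs, prefixList_eq_of_prefix hXs hh, rfl⟩

lemma worstOutcome_mem_range (hu : (Set.range u).Finite) {σ : Strategy X Y}
    {h : List (GameLetter X Y)} (hp : h ∈ preSet σ) : worstOutcome u σ h ∈ Set.range u :=
  outcomesFrom_subset_range u σ h (worstOutcome_mem hu hp)

lemma finite_worstOutcomes (hu : (Set.range u).Finite) (h : List (GameLetter X Y)) :
    {v | ∃ σ : Strategy X Y, h ∈ preSet σ ∧ v = worstOutcome u σ h}.Finite :=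
  hu.subset <| by
    rintro _ ⟨σ, hp, rfl⟩
    exact worstOutcome_mem_range hu hp

lemma worstOutcome_le_optOutcome (hu : (Set.range u).Finite) {σ : Strategy X Y}
    {h : List (GameLetter X Y)} (hp : h ∈ preSet σ) : worstOutcome u σ h ≤ optOutcome u h :=
  have : Nonempty β := ⟨worstOutcome u σ h⟩
  le_csSup (finite_worstOutcomes hu h).bddAbove ⟨σ, hp, rfl⟩

lemma exists_worstOutcome_eq_optOutcome (hu : (Set.range u).Finite) {σ : Strategy X Y}
    {h : List (GameLetter X Y)} (hp : h ∈ preSet σ) :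
    ∃ σ' : Strategy X Y, h ∈ preSet σ' ∧ worstOutcome u σ' h = optOutcome u h := by
  obtain ⟨σ', hp', hσ'⟩ :
      optOutcome u h ∈ {v | ∃ σ : Strategy X Y, h ∈ preSet σ ∧ v = worstOutcome u σ h} :=
    Set.Nonempty.csSup_mem ⟨_, σ, hp, rfl⟩ (finite_worstOutcomes hu h)
  exact ⟨σ', hp', hσ'.symm⟩

lemma optOutcome_mem_range (hu : (Set.range u).Finite) {σ : Strategy X Y}
    {h : List (GameLetter X Y)} (hp : h ∈ preSet σ) : optOutcome u h ∈ Set.range u := by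
  obtain ⟨σ', hp', hσ'⟩ := exists_worstOutcome_eq_optOutcome hu hp
  exact hσ' ▸ worstOutcome_mem_range hu hp'

variable (u) in
noncomputable def optStrategy (h : List (GameLetter X Y)) : Strategy X Y :=
  if H : ∃ σ : Strategy X Y, h ∈ preSet σ ∧ worstOutcome u σ h = optOutcome u h then
    H.choose
  else fun _ => ∅

lemma optStrategy_spec (hu : (Set.range u).Finite) {σ : Strategy X Y}
    {h : List (GameLetter X Y)} (hp : h ∈ preSet σ) :
    h ∈ preSet (optStrategy u h) ∧ worstOutcome u (optStrategy u h) h = optOutcome u h := by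
  have H := exists_worstOutcome_eq_optOutcome hu hp
  rw [optStrategy, dif_pos H]
  exact H.choose_spec

variable (u) in
noncomputable def committed (Xs : ℕ → Set X) : ℕ → Strategy X Y
  | 0 => optStrategy u []
  | n + 1 =>
    let σ := committed Xs n
    let h := prefixList (play σ Xs) (n + 1)
    if optOutcome u h ≤ worstOutcome u σ h then σ else optStrategy u h

lemma committed_congr {Xs Xs' : ℕ → Set X} {n : ℕ} (h : ∀ k < n, Xs k = Xs' k) :
    committed u Xs n = committed u Xs' n := by
  induction n with
  | zero => rfl
  | succ n ih =>
    have ih := ih fun k hk => h k (hk.trans n.lt_succ_self)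
    simp only [committed, ih, prefixList_play_congr _ h]

lemma prefixList_play_committed_succ (hu : (Set.range u).Finite) (Xs : ℕ → Set X) (n : ℕ) :
    prefixList (play (committed u Xs (n + 1)) Xs) (n + 1) =
      prefixList (play (committed u Xs n) Xs) (n + 1) := by
  set h := prefixList (play (committed u Xs n) Xs) (n + 1)
  have hp : h ∈ preSet (committed u Xs n) := prefixList_play_mem_preSet _ Xs (n + 1)
  simp only [committed]
  split_ifs
  · rfl
  · obtain ⟨Xs', hXs'⟩ := (optStrategy_spec hu hp).1
    rw [prefixList_length] at hXs'
    have hinputs := inputs_eq_of_prefixList_play_eq hXs'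
    rw [prefixList_play_congr _ fun k hk => (hinputs k hk).symm, hXs']

lemma worstOutcome_committed (hu : (Set.range u).Finite) (Xs : ℕ → Set X) (n : ℕ) :
    worstOutcome u (committed u Xs n) (prefixList (play (committed u Xs n) Xs) n) =
      optOutcome u (prefixList (play (committed u Xs n) Xs) n) := by
  cases n with
  | zero => exact (optStrategy_spec hu (σ := fun _ => ∅) ⟨fun _ => ∅, rfl⟩).2
  | succ n =>
    rw [prefixList_play_committed_succ hu]
    have hp := prefixList_play_mem_preSet (committed u Xs n) Xs (n + 1)
    simp only [committed]
    split_ifs with hkeep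
    · exact le_antisymm (worstOutcome_le_optOutcome hu hp) hkeep
    · exact (optStrategy_spec hu hp).2

lemma monotone_optOutcome_committed (hu : (Set.range u).Finite) (Xs : ℕ → Set X) :
    Monotone fun n => optOutcome u (prefixList (play (committed u Xs n) Xs) n) := by
  refine monotone_nat_of_le_succ fun n => ?_
  rw [prefixList_play_committed_succ hu, ← worstOutcome_committed hu]
  have hp := prefixList_play_mem_preSet (committed u Xs n) Xs (n + 1)
  calc _ ≤ worstOutcome u (committed u Xs n) (prefixList (play (committed u Xs n) Xs) (n + 1)) :=
        worstOutcome_mono hu hp (prefixList_prefix_succ _ n)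
    _ ≤ _ := worstOutcome_le_optOutcome hu hp

lemma committed_succ_of_optOutcome_le (hu : (Set.range u).Finite) {Xs : ℕ → Set X} {n : ℕ}
    (hle : optOutcome u (prefixList (play (committed u Xs (n + 1)) Xs) (n + 1)) ≤
      optOutcome u (prefixList (play (committed u Xs n) Xs) n)) :
    committed u Xs (n + 1) = committed u Xs n := by
  rw [prefixList_play_committed_succ hu, ← worstOutcome_committed hu] at hle
  have hp := prefixList_play_mem_preSet (committed u Xs n) Xs (n + 1)
  simp only [committed]
  exact if_pos (hle.trans (worstOutcome_mono hu hp (prefixList_prefix_succ _ n)))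

lemma exists_ge_forall_ge_committed_eq (hu : (Set.range u).Finite) (Xs : ℕ → Set X) (m : ℕ) :
    ∃ N ≥ m, ∀ n ≥ N, committed u Xs n = committed u Xs N := by
  set f := fun n => optOutcome u (prefixList (play (committed u Xs n) Xs) n)
  have hfin : (Set.range f).Finite := hu.subset <| by
    rintro _ ⟨n, rfl⟩
    exact optOutcome_mem_range hu (prefixList_play_mem_preSet _ Xs n)
  obtain ⟨_, ⟨N, rfl⟩, hN⟩ :=
    Set.exists_max_image (Set.range f) id hfin (Set.range_nonempty f)
  refine ⟨max m N, le_max_left m N, fun n hn => ?_⟩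
  induction n, hn using Nat.le_induction with
  | base => rfl
  | succ n hn ih =>
    rw [committed_succ_of_optOutcome_le hu ((hN _ ⟨n + 1, rfl⟩).trans
      (monotone_optOutcome_committed hu Xs ((le_max_right m N).trans hn))), ih]

variable (u) in
noncomputable def switchingStrategy : Strategy X Y :=
  fun xs => committed u (fun i => xs.getD i ∅) xs.length xs

lemma prefixList_play_switchingStrategy (hu : (Set.range u).Finite) (Xs : ℕ → Set X) (n : ℕ) :
    prefixList (play (switchingStrategy u) Xs) n = prefixList (play (committed u Xs n) Xs) n := by
  induction n with
  | zero => rfl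
  | succ n ih =>
    have hletter : play (switchingStrategy u) Xs n = play (committed u Xs n) Xs n := by
      simp only [play, switchingStrategy, prefixList_length]
      rw [committed_congr fun k hk => getD_prefixList hk ∅]
    rw [prefixList_succ, ih, hletter, ← prefixList_succ, prefixList_play_committed_succ hu]

lemma exists_play_switchingStrategy_eq (hu : (Set.range u).Finite) (Xs : ℕ → Set X) (m : ℕ) :
    ∃ N ≥ m, play (switchingStrategy u) Xs = play (committed u Xs N) Xs := by
  obtain ⟨N, hmN, hN⟩ := exists_ge_forall_ge_committed_eq hu Xs m
  refine ⟨N, hmN, funext fun k => ?_⟩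
  have h := prefixList_play_switchingStrategy hu Xs (max N (k + 1))
  rw [hN _ (le_max_left _ _)] at h
  exact prefixList_eq_prefixList_iff.1 h k (by omega)

lemma optOutcome_prefixList_le_switchingStrategy (hu : (Set.range u).Finite) (Xs : ℕ → Set X)
    (m : ℕ) :
    optOutcome u (prefixList (play (switchingStrategy u) Xs) m) ≤
      u (play (switchingStrategy u) Xs) := by
  obtain ⟨N, hmN, hplay⟩ := exists_play_switchingStrategy_eq hu Xs m
  rw [prefixList_play_switchingStrategy hu, hplay]
  calc _ ≤ optOutcome u (prefixList (play (committed u Xs N) Xs) N) :=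
        monotone_optOutcome_committed hu Xs hmN
    _ = worstOutcome u (committed u Xs N) (prefixList (play (committed u Xs N) Xs) N) :=
        (worstOutcome_committed hu Xs N).symm
    _ ≤ _ := worstOutcome_le hu ⟨Xs, by rw [prefixList_length], rfl⟩

theorem isGreatest_worstOutcome_switchingStrategy (hu : (Set.range u).Finite)
    {h : List (GameLetter X Y)} (hp : h ∈ preSet (switchingStrategy u)) :
    IsGreatest {v | ∃ σ : Strategy X Y, h ∈ preSet σ ∧ v = worstOutcome u σ h}
      (worstOutcome u (switchingStrategy u) h) := by
  refine ⟨⟨_, hp, rfl⟩, ?_⟩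
  rintro _ ⟨σ, hσ, rfl⟩
  obtain ⟨Xs₀, hXs₀⟩ := hp
  refine (worstOutcome_le_optOutcome hu hσ).trans (le_csInf ⟨_, Xs₀, hXs₀, rfl⟩ ?_)
  rintro _ ⟨Xs, hXs, rfl⟩
  exact hXs ▸ optOutcome_prefixList_le_switchingStrategy hu Xs h.length

end Payoff

lemma finite_range_traceValue {X Y : Type} (Φ : Finset (LTLf (X ⊕ Y)))
    (V : LTLf (X ⊕ Y) → ℝ) : (Set.range (traceValue Φ V)).Finite := by
  refine (Φ.powerset.image fun Ψ => ∑ f ∈ Ψ, V f).finite_toSet.subset ?_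
  rintro _ ⟨π, rfl⟩
  rw [traceValue, ← Finset.sum_filter]
  exact Finset.mem_image_of_mem _ (Finset.mem_powerset.2 (Finset.filter_subset _ _))

theorem stmt3_general {X Y : Type}
    (Φ : Finset (LTLf (X ⊕ Y))) (V : LTLf (X ⊕ Y) → ℝ) :
    ∃ σstar : Strategy X Y, ∀ h ∈ preSet σstar,
      IsGreatest {v | ∃ σ : Strategy X Y, h ∈ preSet σ ∧ v = histValue Φ V σ h}
        (histValue Φ V σstar h) :=
  ⟨switchingStrategy (traceValue Φ V), fun _ hp =>
    isGreatest_worstOutcome_switchingStrategy (finite_range_traceValue Φ V) hp⟩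

/-- there exists an incremental observation optimal strategy `σ*`:
    for every history `h ∈ pre(σ*)`, `V_h(σ*)` is the maximum of `V_h(σ)` over
    all strategies `σ` compatible with `h`. -/
theorem stmt3 {X Y : Type} [Fintype X] [Fintype Y]
    (Φ : Finset (LTLf (X ⊕ Y))) (V : LTLf (X ⊕ Y) → ℝ)
    (hV : ∀ f ∈ Φ, V f ∈ Set.Ioc (0 : ℝ) 1) :
    ∃ σstar : Strategy X Y, ∀ h ∈ preSet σstar,
      IsGreatest {v | ∃ σ : Strategy X Y, h ∈ preSet σ ∧ v = histValue Φ V σ h}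
        (histValue Φ V σstar h) :=
  stmt3_general Φ V
end

section
/- Invariant of the improved incremental algorithm: let v₁ > v₂ > ⋯ > v_ℓ be the distinct values of Σ_{φ∈Ψ} V(φ) over subsets Ψ ⊆ Φ, let F^=_{v_k} = ∪ {F_Ψ | Ψ ⊆ Φ, Σ_{φ∈Ψ} V(φ) = v_k} and F_{v_k} = ∪ {F_Ψ | Ψ ⊆ Φ, Σ_{φ∈Ψ} V(φ) ≥ v_k}, and define W₀ = ∅ and, for k ≥ 1, T_k = W_{k-1} ∪ F^=_{v_k} and W_k = Win(𝒜, T_k). Then W_k = Win(𝒜, F_{v_k}) for every k with 1 ≤ k ≤ ℓ. -/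
open Classical

/-! `Win(𝒜, F)` is the least `PreC`-closed superset of `F`: finitely many inputs make the union
of the iterates `PreC`-closed. Hence `Win` is a closure operator and `Win(Win S ∪ T) = Win(S ∪ T)`.
Since the subset sums are exactly `v₁ > ⋯ > v_ℓ`, `F_{v_{k+1}} = F_{v_k} ∪ F^=_{v_{k+1}}` and
`F_{v₁} = F^=_{v₁}`, so by induction
`W_{k+1} = Win(W_k ∪ F^=_{v_{k+1}}) = Win(F_{v_k} ∪ F^=_{v_{k+1}}) = Win(F_{v_{k+1}})`. -/

section WinRegion

variable {X Y Q : Type} (M : DFA (GameLetter X Y) Q)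

lemma preC_mono {S T : Set Q} (h : S ⊆ T) : PreC M S ⊆ PreC M T :=
  fun _ ⟨Ys, hYs⟩ => ⟨Ys, fun Xs => h (hYs Xs)⟩

lemma monotone_winIter (F : Set Q) : Monotone (WinIter M F) :=
  monotone_nat_of_le_succ fun _ => Set.subset_union_left

lemma subset_winRegion (F : Set Q) : F ⊆ WinRegion M F :=
  Set.subset_iUnion (WinIter M F) 0

lemma winRegion_subset_of_preC_subset {F S : Set Q} (hF : F ⊆ S) (hS : PreC M S ⊆ S) :
    WinRegion M F ⊆ S := by
  refine Set.iUnion_subset fun i => ?_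
  induction i with
  | zero => exact hF
  | succ i ih => exact Set.union_subset ih ((preC_mono M ih).trans hS)

lemma preC_winRegion_subset [Finite X] (F : Set Q) :
    PreC M (WinRegion M F) ⊆ WinRegion M F := by
  rintro q ⟨Ys, hYs⟩
  choose stage hstage using fun Xs : Set X => Set.mem_iUnion.mp (hYs Xs)
  obtain ⟨N, hN⟩ := Finite.exists_le stage
  refine Set.mem_iUnion.mpr ⟨N + 1, Or.inr ⟨Ys, fun Xs => ?_⟩⟩
  exact monotone_winIter M F (hN Xs) (hstage Xs)

def winClosure [Finite X] : ClosureOperator (Set Q) :=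
  .ofPred (WinRegion M) (fun S => PreC M S ⊆ S) (subset_winRegion M) (preC_winRegion_subset M)
    fun _ _ hF hS => winRegion_subset_of_preC_subset M hF hS

lemma winRegion_winRegion_union [Finite X] (S T : Set Q) :
    WinRegion M (WinRegion M S ∪ T) = WinRegion M (S ∪ T) :=
  (winClosure M).closure_sup_closure_left S T

end WinRegion

section Thresholds

variable {X Y ι : Type} {Qs : ι → Type} (A : ∀ i, DFA (GameLetter X Y) (Qs i)) (V : ι → ℝ)

lemma Fge_eq_Feq_of_forall_sum_le {v : ℝ} (h : ∀ Ψ : Finset ι, ∑ i ∈ Ψ, V i ≤ v) :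
    Fge A V v = Feq A V v := by
  have hsets : {Ψ : Finset ι | v ≤ ∑ i ∈ Ψ, V i} = {Ψ | ∑ i ∈ Ψ, V i = v} :=
    Set.ext fun Ψ => ⟨fun hΨ => le_antisymm (h Ψ) hΨ, fun hΨ => hΨ.ge⟩
  rw [Fge, Feq, hsets]

lemma Fge_eq_Fge_union_Feq {v v' : ℝ} (hv : v' ≤ v)
    (hgap : ∀ Ψ : Finset ι, v' ≤ ∑ i ∈ Ψ, V i → ∑ i ∈ Ψ, V i < v → ∑ i ∈ Ψ, V i = v') :
    Fge A V v' = Fge A V v ∪ Feq A V v' := by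
  ext q
  simp only [Fge, Feq, Set.mem_union, Set.mem_iUnion, Set.mem_ofPred_eq, exists_prop]
  constructor
  · rintro ⟨Ψ, hΨ, hq⟩
    rcases lt_or_ge (∑ i ∈ Ψ, V i) v with hlt | hge
    · exact Or.inr ⟨Ψ, hgap Ψ hΨ hlt, hq⟩
    · exact Or.inl ⟨Ψ, hge, hq⟩
  · rintro (⟨Ψ, hΨ, hq⟩ | ⟨Ψ, hΨ, hq⟩)
    · exact ⟨Ψ, hv.trans hΨ, hq⟩
    · exact ⟨Ψ, hΨ.ge, hq⟩

end Thresholds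

theorem stmt13_general {X Y ι : Type} [Fintype X]
    {Qs : ι → Type}
    (V : ι → ℝ)
    (A : ∀ i, DFA (GameLetter X Y) (Qs i))
    (ℓ : ℕ) (vs : ℕ → ℝ)
    (hanti : ∀ k k' : ℕ, k < k' → k' < ℓ → vs k' < vs k)
    (hall : ∀ Ψ : Finset ι, ∃ k < ℓ, ∑ i ∈ Ψ, V i = vs k)
    (W : ℕ → Set (∀ i, Qs i))
    (hW0 : W 0 = ∅)
    (hWs : ∀ k : ℕ, W (k + 1) = WinRegion (prodDFA A) (W k ∪ Feq A V (vs k))) :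
    ∀ k < ℓ, W (k + 1) = WinRegion (prodDFA A) (Fge A V (vs k)) := by
  have hvs : StrictAntiOn vs (Set.Iio ℓ) := fun a _ b hb hab => hanti a b hab hb
  have hmax : ∀ Ψ : Finset ι, ∑ i ∈ Ψ, V i ≤ vs 0 := fun Ψ => by
    obtain ⟨j, hj, hΨ⟩ := hall Ψ
    exact hΨ ▸ (hvs.le_iff_ge hj (j.zero_le.trans_lt hj)).mpr j.zero_le
  have hgap : ∀ k, k + 1 < ℓ → ∀ Ψ : Finset ι,
      vs (k + 1) ≤ ∑ i ∈ Ψ, V i → ∑ i ∈ Ψ, V i < vs k → ∑ i ∈ Ψ, V i = vs (k + 1) := by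
    intro k hk Ψ hge hlt
    obtain ⟨j, hj, hΨ⟩ := hall Ψ
    rw [hΨ] at hge hlt ⊢
    have hkj : k < j := (hvs.lt_iff_gt hj (k.lt_succ_self.trans hk)).mp hlt
    have hjk : j ≤ k + 1 := (hvs.le_iff_ge hk hj).mp hge
    rw [le_antisymm hjk hkj]
  intro k hk
  induction k with
  | zero => rw [hWs, hW0, Set.empty_union, Fge_eq_Feq_of_forall_sum_le A V hmax]
  | succ k ih =>
    rw [hWs, ih (k.lt_succ_self.trans hk), winRegion_winRegion_union,
      ← Fge_eq_Fge_union_Feq A V (hanti k (k + 1) k.lt_succ_self hk).le (hgap k hk)]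

/-- invariant of the improved incremental algorithm: with `W₀ = ∅` and
    `W_{k+1} = Win(𝒜, W_k ∪ F^=_{v_{k+1}})`, we have `W_{k+1} = Win(𝒜, F_{v_{k+1}})`
    for each of the distinct values `v₁ > ⋯ > v_ℓ` (here `vs k` denotes `v_{k+1}`). -/
theorem stmt13 {X Y ι : Type} [Fintype X] [Fintype Y] [Fintype ι]
    {Qs : ι → Type} [∀ i, Fintype (Qs i)]
    (V : ι → ℝ) (hV : ∀ i, V i ∈ Set.Ioc (0 : ℝ) 1)
    (A : ∀ i, DFA (GameLetter X Y) (Qs i))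
    (ℓ : ℕ) (vs : ℕ → ℝ)
    (hanti : ∀ k k' : ℕ, k < k' → k' < ℓ → vs k' < vs k)
    (hvals : ∀ k < ℓ, ∃ Ψ : Finset ι, vs k = ∑ i ∈ Ψ, V i)
    (hall : ∀ Ψ : Finset ι, ∃ k < ℓ, ∑ i ∈ Ψ, V i = vs k)
    (W : ℕ → Set (∀ i, Qs i))
    (hW0 : W 0 = ∅)
    (hWs : ∀ k : ℕ, W (k + 1) = WinRegion (prodDFA A) (W k ∪ Feq A V (vs k))) :
    ∀ k < ℓ, W (k + 1) = WinRegion (prodDFA A) (Fge A V (vs k)) :=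
  stmt13_general V A ℓ vs hanti hall W hW0 hWs
end
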